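/- arXiv:1604.02450 — 10 statements merged into one kernel-verified Lean document; each statement's English description precedes it below -/
import Mathlib

section
/- Any deterministic algorithm (modeled as a deterministic finite-state automaton with query function) that, for every binary stream, outputs at every time an estimate within additive error Wε of the number of 1's among the last W bits, must have at least 2^z states, where z = ⌊W / ⌊2Wε+1⌋⌋. -/
/-! Fooling set. Let `k = ⌊2Wε + 1⌋ > 2Wε` and `z = ⌊W / k⌋`. To `x ∈ {0,1}^z` associate the
word of length `W` made of `W - kz` zeros followed by the bits of `x`, each repeated `k` times.
If the words of `x` and `y` led to the same state, then so would their extensions by `0^t` for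
every `t`. For `t = W - kz + ki` the two window counts are `k` times the number of ones among
the last `z - i` bits of `x`, resp. `y`, and two multiples of `k` at distance `≤ 2Wε < k`
coincide. Equal suffix counts for every `i` force `x = y`, so `x ↦ state` is injective. -/

namespace List

variable {α : Type*}

def stretch (k : ℕ) (l : List α) : List α := l.flatMap (replicate k)

@[simp]
theorem stretch_cons (k : ℕ) (a : α) (l : List α) :
    stretch k (a :: l) = replicate k a ++ stretch k l := by
  simp [stretch]

theorem stretch_append (k : ℕ) (l₁ l₂ : List α) :
    stretch k (l₁ ++ l₂) = stretch k l₁ ++ stretch k l₂ :=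
  flatMap_append

@[simp]
theorem length_stretch (k : ℕ) (l : List α) : (stretch k l).length = k * l.length := by
  induction l with
  | nil => rfl
  | cons a l ih => simp [ih, Nat.mul_succ, Nat.add_comm]

@[simp]
theorem count_stretch [BEq α] [LawfulBEq α] (k : ℕ) (a : α) (l : List α) :
    (stretch k l).count a = k * l.count a := by
  induction l with
  | nil => rfl
  | cons b l ih =>
    by_cases h : b = a <;> simp [ih, count_replicate, h, Nat.mul_succ, Nat.add_comm]

theorem eq_of_count_true_drop_eq {l₁ l₂ : List Bool} (hlen : l₁.length = l₂.length)
    (h : ∀ i ≤ l₁.length, (l₁.drop i).count true = (l₂.drop i).count true) : l₁ = l₂ := by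
  induction l₁ generalizing l₂ with
  | nil => simpa using hlen.symm
  | cons a l₁ ih =>
    obtain _ | ⟨b, l₂⟩ := l₂
    · simp at hlen
    have htail : l₁ = l₂ :=
      ih (by simpa using hlen) fun i hi => by simpa using h (i + 1) (by simpa using hi)
    subst htail
    have hhead := h 0 (Nat.zero_le _)
    cases a <;> cases b <;> simp_all

end List

open List

theorem Nat.eq_of_abs_mul_sub_lt {k a b : ℕ} (h : |(k : ℝ) * a - k * b| < k) : a = b := by
  by_contra hab
  have hone : (1 : ℝ) ≤ |(a : ℝ) - b| := by
    have : (1 : ℤ) ≤ |(a : ℤ) - b| := Int.one_le_abs (sub_ne_zero.mpr (by exact_mod_cast hab))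
    exact_mod_cast this
  rw [← mul_sub, abs_mul, Nat.abs_cast] at h
  nlinarith

/-- `C^W(w)`; when `w.length < W` it counts the ones of all of `w`. -/
def windowCount (W : ℕ) (w : List Bool) : ℕ := (w.drop (w.length - W)).count true

theorem windowCount_append_of_length_eq {W : ℕ} (u : List Bool) {v : List Bool}
    (hv : v.length = W) : windowCount W (u ++ v) = v.count true := by
  simp [windowCount, hv]

theorem windowCount_pad_stretch_append_zeros {W p k : ℕ} {b : List Bool}
    (hW : p + k * b.length = W) {i : ℕ} (hi : i ≤ b.length) :
    windowCount W (replicate p false ++ stretch k b ++ replicate (p + k * i) false) =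
      k * (b.drop i).count true := by
  have hsplit : replicate p false ++ stretch k b ++ replicate (p + k * i) false =
      (replicate p false ++ stretch k (b.take i)) ++
        (stretch k (b.drop i) ++ replicate (p + k * i) false) := by
    conv_lhs => rw [← take_append_drop i b, stretch_append]
    simp only [append_assoc]
  rw [hsplit, windowCount_append_of_length_eq]
  · simp [count_replicate]
  · simp only [length_append, length_stretch, length_drop, length_replicate]
    have : k * (b.length - i) + k * i = k * b.length := by
      rw [← Nat.mul_add, Nat.sub_add_cancel hi]
    omega

section Algorithm

variable {S : Type*} {W : ℕ} {ε : ℝ} {s₀ : S} {δ : S → Bool → S} {q : S → ℝ}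

theorem abs_windowCount_sub_le_of_foldl_eq
    (hcorrect : ∀ w : List Bool, W ≤ w.length →
      |q (w.foldl δ s₀) - (windowCount W w : ℝ)| ≤ W * ε)
    {u v : List Bool} (huv : u.foldl δ s₀ = v.foldl δ s₀) (hu : W ≤ u.length)
    (hv : W ≤ v.length) (s : List Bool) :
    |(windowCount W (u ++ s) : ℝ) - windowCount W (v ++ s)| ≤ 2 * W * ε := by
  have hu' := hcorrect (u ++ s) (by simp; omega)
  have hv' := hcorrect (v ++ s) (by simp; omega)
  rw [foldl_append, huv, abs_sub_comm] at hu'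
  rw [foldl_append] at hv'
  calc _ ≤ _ + _ := abs_sub_le _ _ _
    _ ≤ W * ε + W * ε := add_le_add hu' hv'
    _ = 2 * W * ε := by ring

theorem injective_foldl_pad_stretch
    (hcorrect : ∀ w : List Bool, W ≤ w.length →
      |q (w.foldl δ s₀) - (windowCount W w : ℝ)| ≤ W * ε)
    {p k z : ℕ} (hk : 2 * W * ε < k) (hW : p + k * z = W) :
    Function.Injective fun x : Fin z → Bool =>
      (replicate p false ++ stretch k (ofFn x)).foldl δ s₀ := by
  intro x y hxy
  apply ofFn_injective
  refine eq_of_count_true_drop_eq (by simp) fun i hi => ?_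
  have hlen : ∀ b : List Bool, b.length = z → W ≤ (replicate p false ++ stretch k b).length := by
    intro b hb
    simp [hb, hW]
  have hclose := abs_windowCount_sub_le_of_foldl_eq hcorrect hxy (hlen _ (by simp))
    (hlen _ (by simp)) (replicate (p + k * i) false)
  simp only [length_ofFn] at hi
  rw [windowCount_pad_stretch_append_zeros (by simpa using hW) (by simpa using hi),
    windowCount_pad_stretch_append_zeros (by simpa using hW) (by simpa using hi)] at hclose
  push_cast at hclose
  exact Nat.eq_of_abs_mul_sub_lt (hclose.trans_lt hk)

end Algorithm

theorem stmt_0_general (W : ℕ) (ε : ℝ)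
    (S : Type*) [Fintype S] (s₀ : S) (δ : S → Bool → S) (q : S → ℝ)
    (hcorrect : ∀ w : List Bool, W ≤ w.length →
      |q (w.foldl δ s₀) - ((w.drop (w.length - W)).count true : ℝ)| ≤ (W : ℝ) * ε) :
    2 ^ (W / ⌊2 * (W : ℝ) * ε + 1⌋₊) ≤ Fintype.card S := by
  set k := ⌊2 * (W : ℝ) * ε + 1⌋₊
  have hk : 2 * (W : ℝ) * ε < k := by
    linarith [Nat.lt_floor_add_one (2 * (W : ℝ) * ε + 1)]
  have hW : (W - k * (W / k)) + k * (W / k) = W := Nat.sub_add_cancel (Nat.mul_div_le W k)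
  calc 2 ^ (W / k) = Fintype.card (Fin (W / k) → Bool) := by simp
    _ ≤ Fintype.card S :=
      Fintype.card_le_of_injective _ (injective_foldl_pad_stretch hcorrect hk hW)

/-- Any deterministic finite-state streaming algorithm (states `S`,
initial state `s₀`, transition `δ`, query `q`) that, for every binary stream, outputs
at every time an estimate within additive error `W·ε` of the number of `1`'s among the
last `W` bits must have at least `2 ^ z` states, where `z = ⌊W / ⌊2Wε + 1⌋⌋`. -/
theorem stmt_0 (W : ℕ) (ε : ℝ) (hW : 0 < W) (hε : 0 < ε) (hWε : 1 ≤ 2 * (W : ℝ) * ε)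
    (S : Type*) [Fintype S] (s₀ : S) (δ : S → Bool → S) (q : S → ℝ)
    (hcorrect : ∀ w : List Bool, W ≤ w.length →
      |q (w.foldl δ s₀) - ((w.drop (w.length - W)).count true : ℝ)| ≤ (W : ℝ) * ε) :
    2 ^ (W / ⌊2 * (W : ℝ) * ε + 1⌋₊) ≤ Fintype.card S :=
  stmt_0_general W ε S s₀ δ q hcorrect
end

section
/- For ε ≤ 1/4, any deterministic finite-state algorithm that maintains a Wε-additive approximation of the number of 1's in the last W bits of a binary stream has at least W(1−2ε) states; hence its memory in bits is more than log₂ W − 1, i.e., at least ⌊log₂ W⌋ bits. -/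
/-!
Feed the automaton `W` zeros and then only ones. Its states along the ones are the iterates of a
self-map of `S`, so by pigeonhole they are periodic from some `y < |S|` on, with period `d`. The
state after `0^W 1^y` is then also the state after `0^W 1^(y + W d)`, where the windows hold
`min y W` and `W` ones respectively. One query value approximates both within `Wε`, so
`W(1 - 2ε) ≤ min y W ≤ y < |S|`. For `ε ≤ 1/4` this gives `W < 2|S|`, and the logarithms follow.
-/

open List Function

theorem List.foldl_replicate {α β : Type*} (f : β → α → β) (a : α) (n : ℕ) (b : β) :
    (replicate n a).foldl f b = (fun x => f x a)^[n] b := by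
  induction n generalizing b with
  | zero => rfl
  | succ n ih => simp [replicate_succ, ih, iterate_succ_apply]

theorem List.count_true_drop_replicate_false_append_replicate_true (W m : ℕ) :
    ((replicate W false ++ replicate m true).drop
      ((replicate W false ++ replicate m true).length - W)).count true = min m W := by
  simp only [length_append, length_replicate, drop_append, drop_replicate, count_append,
    count_replicate, beq_true, Bool.false_eq_true, ↓reduceIte, BEq.rfl, add_tsub_cancel_left,
    zero_add]
  omega

theorem Function.exists_iterate_add_mul_eq_iterate {α : Type*} [Fintype α] (f : α → α) (x : α) :
    ∃ y < Fintype.card α, ∃ d, 0 < d ∧ ∀ k, f^[y + k * d] x = f^[y] x := by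
  obtain ⟨i, hi, j, hj, hij, hfij⟩ := Finset.exists_ne_map_eq_of_card_lt_of_maps_to
    (s := Finset.range (Fintype.card α + 1)) (t := Finset.univ) (f := fun n => f^[n] x)
    (by simp) (fun _ _ => Finset.mem_coe.mpr (Finset.mem_univ _))
  simp only [Finset.mem_range] at hi hj
  wlog hlt : i < j generalizing i j
  · exact this j i hij.symm hfij.symm hj hi (by omega)
  have hper : IsPeriodicPt f (j - i) (f^[i] x) := by
    rw [IsPeriodicPt, IsFixedPt, ← iterate_add_apply, Nat.sub_add_cancel hlt.le]
    exact hfij.symm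
  refine ⟨i, by omega, j - i, by omega, fun k => ?_⟩
  rw [add_comm, iterate_add_apply]
  exact (hper.const_mul k).eq

theorem Nat.log_le_clog_of_lt_two_mul {m n : ℕ} (h : m < 2 * n) :
    Nat.log 2 m ≤ Nat.clog 2 n := by
  have hn : n ≤ 2 ^ Nat.clog 2 n := Nat.le_pow_clog one_lt_two n
  refine Nat.lt_succ_iff.mp (Nat.log_lt_of_lt_pow' (Nat.succ_ne_zero _) ?_)
  rw [pow_succ]
  omega

theorem stmt_1_general (W : ℕ) (ε : ℝ) (hε4 : ε ≤ 1 / 4)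
    (S : Type*) [Fintype S] (s₀ : S) (δ : S → Bool → S) (q : S → ℝ)
    (hcorrect : ∀ w : List Bool, W ≤ w.length →
      |q (w.foldl δ s₀) - ((w.drop (w.length - W)).count true : ℝ)| ≤ (W : ℝ) * ε) :
    (W : ℝ) * (1 - 2 * ε) < Fintype.card S ∧
      Nat.log 2 W ≤ Nat.clog 2 (Fintype.card S) := by
  set f : S → S := fun s => δ s true
  set s₁ := (replicate W false).foldl δ s₀
  have hq : ∀ m, |q (f^[m] s₁) - (min m W : ℕ)| ≤ (W : ℝ) * ε := by
    intro m
    have := hcorrect (replicate W false ++ replicate m true) (by simp)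
    rwa [count_true_drop_replicate_false_append_replicate_true, foldl_append,
      foldl_replicate] at this
  obtain ⟨y, hy, d, hd, hper⟩ := exists_iterate_add_mul_eq_iterate f s₁
  have hfull : min (y + W * d) W = W := min_eq_right (by nlinarith)
  have h₁ := abs_le.mp (hq y)
  have h₂ := abs_le.mp (hq (y + W * d))
  rw [hper, hfull] at h₂
  have hmin : ((min y W : ℕ) : ℝ) ≤ y := by exact_mod_cast min_le_left y W
  have hy' : (y : ℝ) < Fintype.card S := by exact_mod_cast hy
  have hcard : (W : ℝ) * (1 - 2 * ε) < Fintype.card S := by linarith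
  refine ⟨hcard, Nat.log_le_clog_of_lt_two_mul ?_⟩
  have : (W : ℝ) < 2 * Fintype.card S := by nlinarith [(Nat.cast_nonneg W : (0 : ℝ) ≤ W)]
  exact_mod_cast this

/-- For `ε ≤ 1/4`, any deterministic finite-state algorithm maintaining a
`W·ε`-additive approximation of the number of `1`'s in the last `W` bits has more than
`W(1 - 2ε)` states; hence its memory in bits (`⌈log₂ |S|⌉`) is at least `⌊log₂ W⌋`. -/
theorem stmt_1 (W : ℕ) (ε : ℝ) (hW : 0 < W) (hε : 0 < ε) (hε4 : ε ≤ 1 / 4)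
    (S : Type*) [Fintype S] (s₀ : S) (δ : S → Bool → S) (q : S → ℝ)
    (hcorrect : ∀ w : List Bool, W ≤ w.length →
      |q (w.foldl δ s₀) - ((w.drop (w.length - W)).count true : ℝ)| ≤ (W : ℝ) * ε) :
    (W : ℝ) * (1 - 2 * ε) < Fintype.card S ∧
      Nat.log 2 W ≤ Nat.clog 2 (Fintype.card S) :=
  stmt_1_general W ε hε4 S s₀ δ q hcorrect
end

section
/- Any deterministic finite-state algorithm that maintains, within additive error RWε, the sum of the last W elements of a stream of integers in {0,…,R} has at least |C|^W states, where C = { n·⌊2RWε+1⌋ : n ∈ {0,…,⌊1/(2Wε + 1/R)⌋} }; hence it requires at least W·log₂⌊1/(4Wε)+1⌋ bits of memory. -/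
/-!
Feed the automaton a word `u` of length `W` whose letters are multiples of `g = ⌊2RWε + 1⌋`,
followed by `t` zeros. The answer then approximates, within `RWε`, the sum of `u.drop t`.
Two such sums are multiples of `g` differing by at most `2RWε < g`, so the state reached after
`u` determines every suffix sum of `u`, hence `u` itself. Words over the `⌊1/(2Wε + 1/R)⌋ + 1`
multiples `n·g ≤ R` therefore reach pairwise distinct states.
-/

open Function

theorem List.eq_of_length_eq_of_sum_drop_eq {M : Type*} [AddRightCancelMonoid M] :
    ∀ {l₁ l₂ : List M}, l₁.length = l₂.length →
      (∀ t, (l₁.drop t).sum = (l₂.drop t).sum) → l₁ = l₂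
  | [], [], _, _ => rfl
  | x :: xs, y :: ys, hl, h => by
    obtain rfl : xs = ys :=
      eq_of_length_eq_of_sum_drop_eq (by simpa using hl) fun t => h (t + 1)
    simpa using h 0

theorem Nat.eq_of_dvd_of_abs_sub_lt {a b g : ℕ} (ha : g ∣ a) (hb : g ∣ b)
    (h : |(a : ℝ) - b| < g) : a = b := by
  have := Int.eq_zero_of_abs_lt_dvd
    (Int.dvd_sub (Int.natCast_dvd_natCast.2 ha) (Int.natCast_dvd_natCast.2 hb))
    (by exact_mod_cast h : |(a : ℤ) - b| < g)
  omega

theorem Nat.mul_floor_le_of_le_floor_one_div {x : ℝ} {R n : ℕ} (hx : 0 ≤ x) (hR : 0 < R)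
    (hn : n ≤ ⌊1 / (x + 1 / R)⌋₊) : n * ⌊R * x + 1⌋₊ ≤ R := by
  have hRpos : (0 : ℝ) < R := by exact_mod_cast hR
  have hn' : (n : ℝ) * (R * x + 1) ≤ R := by
    have := (le_div_iff₀ (by positivity)).mp ((Nat.le_floor_iff (by positivity)).mp hn)
    calc (n : ℝ) * (R * x + 1) = R * (n * (x + 1 / R)) := by field_simp
      _ ≤ R := mul_le_of_le_one_right hRpos.le this
  have hg : (⌊R * x + 1⌋₊ : ℝ) ≤ R * x + 1 := Nat.floor_le (by positivity)
  have : (n : ℝ) * ⌊R * x + 1⌋₊ ≤ R :=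
    (mul_le_mul_of_nonneg_left hg n.cast_nonneg).trans hn'
  exact_mod_cast this

theorem Real.natCast_mul_logb_le_logb_of_pow_le {b x y : ℝ} {n : ℕ} (hb : 1 < b) (hx : 0 < x)
    (h : x ^ n ≤ y) : n * logb b x ≤ logb b y := by
  rw [← Real.logb_pow]
  exact Real.logb_le_logb_of_le hb (by positivity) h

section ApproxWindowSum

variable {S α : Type*} {s₀ : S} {δ : S → α → S} {q : S → ℝ} {v : α → ℕ} {W : ℕ} {e : ℝ}

def ApproxWindowSum (s₀ : S) (δ : S → α → S) (q : S → ℝ) (v : α → ℕ) (W : ℕ) (e : ℝ) : Prop :=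
  ∀ w : List α, W ≤ w.length →
    |q (w.foldl δ s₀) - (((w.drop (w.length - W)).map v).sum : ℝ)| ≤ e

theorem ApproxWindowSum.abs_sub_sum_drop_le (h : ApproxWindowSum s₀ δ q v W e) {z : α}
    (hz : v z = 0) {u : List α} (hu : u.length = W) (t : ℕ) :
    |q ((List.replicate t z).foldl δ (u.foldl δ s₀)) - (((u.drop t).map v).sum : ℝ)| ≤ e := by
  have := h (u ++ List.replicate t z) (by simp [hu])
  simpa [List.drop_append, hu, hz] using this

theorem ApproxWindowSum.sum_drop_eq (h : ApproxWindowSum s₀ δ q v W e) {z : α} (hz : v z = 0)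
    {g : ℕ} (hg : 2 * e < g) {u u' : List α} (hu : u.length = W) (hu' : u'.length = W)
    (hdvd : ∀ a ∈ u, g ∣ v a) (hdvd' : ∀ a ∈ u', g ∣ v a)
    (hs : u.foldl δ s₀ = u'.foldl δ s₀) (t : ℕ) :
    ((u.drop t).map v).sum = ((u'.drop t).map v).sum := by
  have hA := h.abs_sub_sum_drop_le hz hu t
  have hB := h.abs_sub_sum_drop_le hz hu' t
  rw [hs] at hA
  have hdvd_sum {l : List α} (hl : ∀ a ∈ l, g ∣ v a) : g ∣ ((l.drop t).map v).sum :=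
    List.dvd_sum <| List.forall_mem_map.2 fun a ha => hl a (List.mem_of_mem_drop ha)
  refine Nat.eq_of_dvd_of_abs_sub_lt (hdvd_sum hdvd) (hdvd_sum hdvd') ?_
  calc _ ≤ _ := abs_sub_le _ (q ((List.replicate t z).foldl δ (u'.foldl δ s₀))) _
    _ < g := by rw [abs_sub_comm]; linarith

theorem ApproxWindowSum.card_pow_le_card [Fintype S] (h : ApproxWindowSum s₀ δ q v W e)
    {z : α} (hz : v z = 0) {ι : Type*} [Fintype ι] {c : ι → α} (hc : Injective (v ∘ c))
    {g : ℕ} (hdvd : ∀ i, g ∣ v (c i)) (hg : 2 * e < g) :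
    Fintype.card ι ^ W ≤ Fintype.card S := by
  have hmem (a : Fin W → ι) : ∀ x ∈ List.ofFn (c ∘ a), g ∣ v x :=
    List.forall_mem_ofFn_iff.2 fun i => hdvd (a i)
  have hinj : Injective fun a : Fin W → ι => (List.ofFn (c ∘ a)).foldl δ s₀ := by
    intro a b hab
    have := List.eq_of_length_eq_of_sum_drop_eq (l₁ := (List.ofFn (c ∘ a)).map v)
      (l₂ := (List.ofFn (c ∘ b)).map v) (by simp) fun t => by
        simpa only [List.map_drop] using
          h.sum_drop_eq hz hg (by simp) (by simp) (hmem a) (hmem b) hab t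
    rw [List.map_ofFn, List.map_ofFn] at this
    exact hc.comp_left (List.ofFn_injective this)
  simpa using Fintype.card_le_of_injective _ hinj

end ApproxWindowSum

/-- Any deterministic finite-state algorithm maintaining, within additive
error `R·W·ε`, the sum of the last `W` elements of a stream over `{0,…,R}` has at least
`|C| ^ W` states, where `|C| = ⌊1/(2Wε + 1/R)⌋ + 1` (the set
`C = { n·⌊2RWε+1⌋ : n ∈ {0,…,⌊1/(2Wε + 1/R)⌋} }`); hence (whenever `ε ≥ 1/(2RW)`, so that
`⌊1/(4Wε)⌋ + 1 ≤ |C|`) it requires at least `W·log₂⌊1/(4Wε) + 1⌋` bits of memory. -/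
theorem stmt_3 (W R : ℕ) (ε : ℝ) (hW : 0 < W) (hR : 0 < R) (hε : 0 < ε)
    (S : Type*) [Fintype S] (s₀ : S) (δ : S → Fin (R + 1) → S) (q : S → ℝ)
    (hcorrect : ∀ w : List (Fin (R + 1)), W ≤ w.length →
      |q (w.foldl δ s₀) - (((w.drop (w.length - W)).map (fun a => (a : ℕ))).sum : ℝ)|
        ≤ (R : ℝ) * W * ε) :
    (⌊1 / (2 * (W : ℝ) * ε + 1 / (R : ℝ))⌋₊ + 1) ^ W ≤ Fintype.card S ∧
      (1 / (2 * (R : ℝ) * W) ≤ ε →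
        (W : ℝ) * Real.logb 2 ((⌊1 / (4 * (W : ℝ) * ε)⌋₊ : ℝ) + 1)
          ≤ Real.logb 2 (Fintype.card S)) := by
  -- The cast `(a : ℕ)` in `hcorrect` elaborates through the list monad, as a `flatMap`.
  have hwin : ApproxWindowSum s₀ δ q Fin.val W (R * W * ε) := fun w hw => by
    simpa [← List.map_eq_flatMap, Function.comp_def] using hcorrect w hw
  set g := ⌊(R : ℝ) * (2 * W * ε) + 1⌋₊
  set K := ⌊1 / (2 * (W : ℝ) * ε + 1 / (R : ℝ))⌋₊
  have hletter (n : Fin (K + 1)) : n * g < R + 1 :=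
    Nat.lt_succ_of_le <| Nat.mul_floor_le_of_le_floor_one_div (by positivity) hR
      (Nat.lt_succ_iff.1 n.isLt)
  have hg : 2 * ((R : ℝ) * W * ε) < g := by
    have := Nat.sub_one_lt_floor ((R : ℝ) * (2 * W * ε) + 1)
    linarith
  have hgpos : 0 < g := Nat.floor_pos.2 (le_add_of_nonneg_left (by positivity))
  have hcard : (K + 1) ^ W ≤ Fintype.card S := by
    simpa using hwin.card_pow_le_card (z := 0) rfl
      (c := fun n : Fin (K + 1) => ⟨n * g, hletter n⟩)
      (fun m n hmn => Fin.ext (Nat.eq_of_mul_eq_mul_right hgpos hmn))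
      (fun n => dvd_mul_left g n) hg
  refine ⟨hcard, fun hεR => ?_⟩
  have hRW : 1 / (R : ℝ) ≤ 2 * W * ε := by
    rw [div_le_iff₀ (by positivity)] at hεR ⊢
    linarith
  have hK : ⌊1 / (4 * (W : ℝ) * ε)⌋₊ ≤ K :=
    Nat.floor_le_floor (one_div_le_one_div_of_le (by positivity) (by linarith))
  refine Real.natCast_mul_logb_le_logb_of_pow_le one_lt_two (by positivity) ?_
  exact_mod_cast (Nat.pow_le_pow_left (Nat.succ_le_succ hK) W).trans hcard
end

section
/- Algorithm 1 for Basic-Counting has absolute error strictly bounded by Wε = W/(2k): for any binary input stream of length W+m with 0 ≤ m < W/k, the estimate Ĉ = (W/k)·B + y − W/(2k) − m·b_i satisfies |Ĉ − C^W| ≤ W/(2k), where C^W = Σ_{j=m+1}^{W+m} x_j is the true count of 1's in the last W bits. -/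
open Finset

/-- The counter `y` of Algorithm 1: blocks have length `L`; at the end of a block
(`(n+1) % L = 0`), if the accumulated count reaches `L`, then `L` is subtracted
(and the corresponding block bit is set). `y₀` is the initial remainder. -/
noncomputable def countY (L : ℕ) (y₀ : ℝ) (x : ℕ → ℝ) : ℕ → ℝ
  | 0 => y₀
  | n + 1 =>
    if (n + 1) % L = 0 ∧ (L : ℝ) ≤ countY L y₀ x n + x (n + 1) then
      countY L y₀ x n + x (n + 1) - L
    else
      countY L y₀ x n + x (n + 1)

/-- The bit recorded for block `j ≥ 1` (ending at time `j·L`): it is `1` iff the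
accumulated counter reached the threshold `L` at the end of that block. -/
noncomputable def blockBit (L : ℕ) (y₀ : ℝ) (x : ℕ → ℝ) (j : ℕ) : ℝ :=
  if (L : ℝ) ≤ countY L y₀ x (j * L - 1) + x (j * L) then 1 else 0

lemma countY_invariant (L : ℕ) (hL : 0 < L) (y₀ : ℝ) (x : ℕ → ℝ) (n : ℕ) :
    countY L y₀ x n + L * ∑ j ∈ Icc 1 (n / L), blockBit L y₀ x j
      = y₀ + ∑ j ∈ Icc 1 n, x j := by
  induction n with
  | zero => simp [countY]
  | succ n ih =>
    have hxsum : ∑ j ∈ Icc 1 (n + 1), x j = (∑ j ∈ Icc 1 n, x j) + x (n + 1) :=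
      Finset.sum_Icc_succ_top (by omega) x
    by_cases hmod : (n + 1) % L = 0
    · have hdvd : L ∣ n + 1 := Nat.dvd_of_mod_eq_zero hmod
      have hdiv : (n + 1) / L = n / L + 1 := by
        rw [Nat.succ_div]; simp [hdvd]
      have hmul : (n / L + 1) * L = n + 1 := by
        rw [← hdiv]; exact Nat.div_mul_cancel hdvd
      have hbb : blockBit L y₀ x (n / L + 1)
          = if (L : ℝ) ≤ countY L y₀ x n + x (n + 1) then 1 else 0 := by
        rw [blockBit, hmul]; simp
      have hbsum : ∑ j ∈ Icc 1 ((n + 1) / L), blockBit L y₀ x j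
          = (∑ j ∈ Icc 1 (n / L), blockBit L y₀ x j) + blockBit L y₀ x (n / L + 1) := by
        rw [hdiv]; exact Finset.sum_Icc_succ_top (Nat.le_add_left 1 _) _
      by_cases hth : (L : ℝ) ≤ countY L y₀ x n + x (n + 1)
      · rw [countY]
        simp only [hmod, hth, and_self, if_true]
        rw [hbsum, hbb, if_pos hth, hxsum]
        ring_nf; ring_nf at ih; linarith
      · rw [countY]
        simp only [hmod, hth, and_false, if_false]
        rw [hbsum, hbb, if_neg hth, hxsum]
        ring_nf; ring_nf at ih; linarith
    · have hdvd : ¬ L ∣ n + 1 := by simpa [Nat.dvd_iff_mod_eq_zero] using hmod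
      have hdiv : (n + 1) / L = n / L := by
        rw [Nat.succ_div]; simp [hdvd]
      rw [countY]
      simp only [hmod, false_and, if_false]
      rw [hdiv, hxsum]
      linarith

/-- Algorithm 1 for Basic-Counting has absolute error bounded by
`Wε = W/(2k)`: for any binary stream `x₁,…,x_{W+m}` with `0 ≤ m < W/k` (block length
`L = W/k`, initial remainder `y₀ ∈ [0, L]`), the estimate
`Ĉ = (W/k)·B + y − W/(2k) − m·b_i` (where `B` is the sum of the `k` stored block bits
and `b_i` is the oldest block's bit) satisfies `|Ĉ − C^W| ≤ W/(2k)`, where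
`C^W = Σ_{j=m+1}^{W+m} x_j` is the true count of `1`'s in the last `W` bits. -/
theorem stmt_5 (W k L m : ℕ) (hk : 0 < k) (hL : 0 < L) (hWkL : W = k * L) (hm : m < L)
    (y₀ : ℝ) (hy₀ : 0 ≤ y₀ ∧ y₀ ≤ (L : ℝ))
    (x : ℕ → ℝ) (hx : ∀ j, x j = 0 ∨ x j = 1) :
    |((L : ℝ) * (∑ j ∈ Finset.Icc 1 k, blockBit L y₀ x j) + countY L y₀ x (W + m)
          - (W : ℝ) / (2 * k) - (m : ℝ) * blockBit L y₀ x 1)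
        - ∑ j ∈ Finset.Icc (m + 1) (W + m), x j| ≤ (W : ℝ) / (2 * k) := by
  obtain ⟨hy0, hy1⟩ := hy₀
  have hx0 : ∀ j, 0 ≤ x j := fun j => by rcases hx j with h | h <;> simp [h]
  have hx1 : ∀ j, x j ≤ 1 := fun j => by rcases hx j with h | h <;> simp [h]
  -- W/(2k) = L/2
  have hW2k : (W : ℝ) / (2 * k) = (L : ℝ) / 2 := by
    subst hWkL
    have hk' : (k : ℝ) ≠ 0 := Nat.cast_ne_zero.mpr hk.ne'
    push_cast
    field_simp
  -- (W+m)/L = k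
  have hdiv : (W + m) / L = k := by
    subst hWkL
    rw [Nat.add_comm, Nat.add_mul_div_right _ _ hL, Nat.div_eq_of_lt hm]
    omega
  have hinv := countY_invariant L hL y₀ x (W + m)
  rw [hdiv] at hinv
  -- split the big sum
  have hsplit : (∑ j ∈ Icc 1 (W + m), x j)
      = (∑ j ∈ Icc 1 m, x j) + ∑ j ∈ Icc (m + 1) (W + m), x j := by
    rw [show Icc 1 (W + m) = Ioc 0 (W + m) from (Finset.Icc_add_one_left_eq_Ioc 0 _),
        show Icc 1 m = Ioc 0 m from (Finset.Icc_add_one_left_eq_Ioc 0 _),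
        show Icc (m + 1) (W + m) = Ioc m (W + m) from (Finset.Icc_add_one_left_eq_Ioc m _)]
    exact (Finset.sum_Ioc_consecutive _ (Nat.zero_le m) (by omega)).symm
  -- sums bounds
  have hSm0 : 0 ≤ ∑ j ∈ Icc 1 m, x j := Finset.sum_nonneg fun j _ => hx0 j
  have hSmle : ∑ j ∈ Icc 1 m, x j ≤ (m : ℝ) := by
    calc ∑ j ∈ Icc 1 m, x j ≤ ∑ j ∈ Icc 1 m, (1 : ℝ) :=
          Finset.sum_le_sum fun j _ => hx1 j
      _ = (m : ℝ) := by simp [Nat.card_Icc]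
  -- values of blockBit 1
  have hcY : countY L y₀ x (L - 1) = y₀ + ∑ j ∈ Icc 1 (L - 1), x j := by
    have := countY_invariant L hL y₀ x (L - 1)
    rw [Nat.div_eq_of_lt (by omega)] at this
    simpa using this
  have hSL : (∑ j ∈ Icc 1 (L - 1), x j) + x L = ∑ j ∈ Icc 1 L, x j := by
    have : L = (L - 1) + 1 := by omega
    rw [this, Finset.sum_Icc_succ_top (by omega) x]
    congr 1 <;> omega
  have hbb1 : blockBit L y₀ x 1
      = if (L : ℝ) ≤ y₀ + ∑ j ∈ Icc 1 L, x j then 1 else 0 := by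
    rw [blockBit, one_mul, hcY, add_assoc, hSL]
  -- compare S(m) with S(L)
  have hmL : m ≤ L := hm.le
  have hSmSL : ∑ j ∈ Icc 1 m, x j ≤ ∑ j ∈ Icc 1 L, x j :=
    Finset.sum_le_sum_of_subset_of_nonneg (Finset.Icc_subset_Icc_right hmL)
      (fun j _ _ => hx0 j)
  have hSLSm : (∑ j ∈ Icc 1 L, x j) - (∑ j ∈ Icc 1 m, x j) ≤ (L : ℝ) - m := by
    have hsplit2 : (∑ j ∈ Icc 1 L, x j)
        = (∑ j ∈ Icc 1 m, x j) + ∑ j ∈ Ioc m L, x j := by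
      rw [show Icc 1 L = Ioc 0 L from (Finset.Icc_add_one_left_eq_Ioc 0 _),
          show Icc 1 m = Ioc 0 m from (Finset.Icc_add_one_left_eq_Ioc 0 _)]
      exact (Finset.sum_Ioc_consecutive _ (Nat.zero_le m) hmL).symm
    have hb : ∑ j ∈ Ioc m L, x j ≤ ((L : ℝ) - m) := by
      calc ∑ j ∈ Ioc m L, x j ≤ ∑ j ∈ Ioc m L, (1 : ℝ) :=
            Finset.sum_le_sum fun j _ => hx1 j
        _ = ((L - m : ℕ) : ℝ) := by simp [Nat.card_Ioc]
        _ = (L : ℝ) - m := by push_cast [hmL]; ring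
    linarith
  rw [hsplit] at hinv
  rw [hW2k, abs_le]
  have hm' : (m : ℝ) ≤ L := by exact_mod_cast hmL
  by_cases hth : (L : ℝ) ≤ y₀ + ∑ j ∈ Icc 1 L, x j
  · rw [hbb1, if_pos hth]
    constructor <;> linarith
  · rw [hbb1, if_neg hth]
    push_neg at hth
    constructor <;> linarith
end

section
/- Case b_i = 1 of the error bound: if y₀ + Σ_{j=1}^{W/k} x_j ≥ W/k with x_j ∈ {0,1}, 0 ≤ y₀ ≤ W/k, and 0 ≤ m < W/k, then −W/(2k) ≤ y₀ + Σ_{j=1}^{m} x_j − m − W/(2k) ≤ W/(2k). -/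
open Finset

/-- Case `b_i = 1` of the error bound: if
`y₀ + Σ_{j=1}^{W/k} x_j ≥ W/k` with bits `x_j ∈ {0,1}`, `0 ≤ y₀ ≤ W/k`, and
`0 ≤ m < W/k`, then `−W/(2k) ≤ y₀ + Σ_{j=1}^{m} x_j − m − W/(2k) ≤ W/(2k)`. -/
theorem stmt_6 (W k m : ℕ) (hk : 0 < k) (hdvd : k ∣ W) (hL : 0 < W / k) (hm : m < W / k)
    (x : ℕ → ℝ) (hx : ∀ j, x j = 0 ∨ x j = 1)
    (y₀ : ℝ) (hy₀ : 0 ≤ y₀ ∧ y₀ ≤ ((W / k : ℕ) : ℝ))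
    (hthr : ((W / k : ℕ) : ℝ) ≤ y₀ + ∑ j ∈ Finset.Icc 1 (W / k), x j) :
    -((W : ℝ) / (2 * k)) ≤ y₀ + (∑ j ∈ Finset.Icc 1 m, x j) - (m : ℝ) - (W : ℝ) / (2 * k) ∧
      y₀ + (∑ j ∈ Finset.Icc 1 m, x j) - (m : ℝ) - (W : ℝ) / (2 * k) ≤ (W : ℝ) / (2 * k) := by
  set L := W / k with hLdef
  have hW : (W : ℝ) = (k : ℝ) * (L : ℝ) := by
    exact_mod_cast (Nat.mul_div_cancel' hdvd).symm
  have hk' : (0 : ℝ) < k := by exact_mod_cast hk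
  have hhalf : (W : ℝ) / (2 * k) = (L : ℝ) / 2 := by
    rw [hW]; field_simp
  have hx0 : ∀ j, 0 ≤ x j := fun j => by rcases hx j with h | h <;> simp [h]
  have hx1 : ∀ j, x j ≤ 1 := fun j => by rcases hx j with h | h <;> simp [h]
  -- split the full sum
  have hsplit : ∑ j ∈ Finset.Icc 1 L, x j
      = (∑ j ∈ Finset.Icc 1 m, x j) + ∑ j ∈ Finset.Ioc m L, x j := by
    rw [show Finset.Icc 1 L = Finset.Ioc 0 L by rfl,
        show Finset.Icc 1 m = Finset.Ioc 0 m by rfl]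
    exact (Finset.sum_Ioc_consecutive _ (Nat.zero_le m) hm.le).symm
  have htail : ∑ j ∈ Finset.Ioc m L, x j ≤ ((L - m : ℕ) : ℝ) := by
    calc ∑ j ∈ Finset.Ioc m L, x j ≤ ∑ j ∈ Finset.Ioc m L, (1 : ℝ) :=
          Finset.sum_le_sum fun j _ => hx1 j
      _ = ((L - m : ℕ) : ℝ) := by simp [Nat.card_Ioc]
  have hcast : ((L - m : ℕ) : ℝ) = (L : ℝ) - (m : ℝ) := by
    exact_mod_cast Nat.cast_sub hm.le
  have hlow : (m : ℝ) ≤ y₀ + ∑ j ∈ Finset.Icc 1 m, x j := by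
    have := hthr
    rw [hsplit] at this
    have := le_trans this (by linarith [htail, hcast.le] :
      y₀ + ((∑ j ∈ Finset.Icc 1 m, x j) + ∑ j ∈ Finset.Ioc m L, x j)
        ≤ y₀ + (∑ j ∈ Finset.Icc 1 m, x j) + ((L : ℝ) - (m : ℝ)))
    linarith
  have hhi : ∑ j ∈ Finset.Icc 1 m, x j ≤ (m : ℝ) := by
    calc ∑ j ∈ Finset.Icc 1 m, x j ≤ ∑ j ∈ Finset.Icc 1 m, (1 : ℝ) :=
          Finset.sum_le_sum fun j _ => hx1 j
      _ = (m : ℝ) := by simp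
  rw [hhalf]
  constructor <;> linarith [hy₀.1, hy₀.2]
end

section
/- The memory consumption of Algorithm 1 is k + ⌈2 + log₂(Wε)⌉ + ⌈1 + log₂(Wε)⌉ + ⌈log₂ k⌉ + ⌈log₂(k+1)⌉ ≤ 1/(2ε) + 2log₂ W + 6 bits, where k = 1/(2ε). -/
/-- The memory consumption of Algorithm 1 is
`k + ⌈2 + log₂(Wε)⌉ + ⌈1 + log₂(Wε)⌉ + ⌈log₂ k⌉ + ⌈log₂(k+1)⌉ ≤ 1/(2ε) + 2·log₂ W + 6`
bits, where `k = 1/(2ε)` is a positive integer and `Wε ≥ 1`. -/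
theorem stmt_8 (W k : ℕ) (ε : ℝ) (hW : 0 < W) (hk : 0 < k) (hε : 0 < ε)
    (hkε : (k : ℝ) = 1 / (2 * ε)) (hWε : 1 ≤ (W : ℝ) * ε) :
    (k : ℝ) + (⌈(2 : ℝ) + Real.logb 2 ((W : ℝ) * ε)⌉ : ℝ)
        + (⌈(1 : ℝ) + Real.logb 2 ((W : ℝ) * ε)⌉ : ℝ)
        + (⌈Real.logb 2 (k : ℝ)⌉ : ℝ) + (⌈Real.logb 2 ((k : ℝ) + 1)⌉ : ℝ)
      ≤ 1 / (2 * ε) + 2 * Real.logb 2 (W : ℝ) + 6 := by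
  have hk1 : (1 : ℝ) ≤ (k : ℝ) := by exact_mod_cast hk
  have hkpos : (0 : ℝ) < (k : ℝ) := by linarith
  have hWε0 : (0 : ℝ) < (W : ℝ) * ε := by linarith
  have hεne : ε ≠ 0 := ne_of_gt hε
  set L := Real.logb 2 ((W : ℝ) * ε) with hLdef
  have hL : 0 ≤ L := Real.logb_nonneg one_lt_two hWε
  -- W = (W*ε) * (2*k)
  have hWeq : (W : ℝ) = ((W : ℝ) * ε) * (2 * (k : ℝ)) := by
    rw [hkε]; field_simp
  have hlogW : Real.logb 2 (W : ℝ) = L + 1 + Real.logb 2 (k : ℝ) := by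
    rw [hWeq, Real.logb_mul (ne_of_gt hWε0) (by positivity),
      Real.logb_mul (by norm_num) (ne_of_gt hkpos), Real.logb_self_eq_one one_lt_two]
    ring
  have c1 : (⌈(2 : ℝ) + L⌉ : ℝ) ≤ 3 + L := by
    have := Int.ceil_lt_add_one ((2 : ℝ) + L); linarith
  have c2 : (⌈(1 : ℝ) + L⌉ : ℝ) ≤ 2 + L := by
    have := Int.ceil_lt_add_one ((1 : ℝ) + L); linarith
  have c3 : (⌈Real.logb 2 (k : ℝ)⌉ : ℝ) ≤ Real.logb 2 (k : ℝ) + 1 := by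
    have := Int.ceil_lt_add_one (Real.logb 2 (k : ℝ)); linarith
  have c4 : (⌈Real.logb 2 ((k : ℝ) + 1)⌉ : ℝ) ≤ Real.logb 2 ((k : ℝ) + 1) + 1 := by
    have := Int.ceil_lt_add_one (Real.logb 2 ((k : ℝ) + 1)); linarith
  have hmono : Real.logb 2 ((k : ℝ) + 1) ≤ Real.logb 2 (k : ℝ) + 1 := by
    have h2k : Real.logb 2 (2 * (k : ℝ)) = 1 + Real.logb 2 (k : ℝ) := by
      rw [Real.logb_mul (by norm_num) (ne_of_gt hkpos),
        Real.logb_self_eq_one one_lt_two]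
    have : Real.logb 2 ((k : ℝ) + 1) ≤ Real.logb 2 (2 * (k : ℝ)) :=
      Real.logb_le_logb_of_le one_lt_two (by positivity) (by linarith)
    linarith
  rw [← hkε]
  linarith
end

section
/- Algorithm 2's total additive error is at most RWε: under the invariant (W/k)·B + y_W = y₀ + Σ_{j=1}^{W} x̃_j, with 0 ≤ y ≤ W/k at block ends and per-element rounding error at most 2^{−1−f}, the estimate Ŝ = R·((W/k)·B + y_{W+m} − W/(2k) − m·b_i) satisfies |Ŝ − S^W| ≤ R·(2^{−1−f}·W + W/(2k)), and in particular |Ŝ − S^W| ≤ RWε whenever 2^{−1−f} + 1/(2k) ≤ ε. -/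
open Finset

/-- Algorithm 2's total additive error is at most `RWε`: with block
length `L = W/k`, under the invariant `(W/k)·B + y_W = y₀ + Σ_{j=1}^{W} x̃_j`, with
`0 ≤ y ≤ W/k` at block ends, per-element rounding error at most `2^{−1−f}`, and the
oldest block bit `b_i` recording whether the counter crossed the threshold in block 1,
the estimate `Ŝ = R·((W/k)·B + y_{W+m} − W/(2k) − m·b_i)` satisfies
`|Ŝ − S^W| ≤ R·(2^{−1−f}·W + W/(2k))`; in particular `|Ŝ − S^W| ≤ R·W·ε` whenever
`2^{−1−f} + 1/(2k) ≤ ε`. -/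
theorem stmt_12 (W k L R m f : ℕ) (ε : ℝ)
    (hk : 0 < k) (hL : 0 < L) (hW : W = k * L) (hR : 0 < R) (hm : m < L)
    (x : ℕ → ℕ) (hx : ∀ j, x j ≤ R)
    (xt : ℕ → ℝ) (hxt0 : ∀ j, 0 ≤ xt j) (hxt1 : ∀ j, xt j ≤ 1)
    (hrnd : ∀ j, |(x j : ℝ) / (R : ℝ) - xt j| ≤ (2 : ℝ) ^ (-(1 : ℤ) - (f : ℤ)))
    (y₀ yW B bi : ℝ)
    (hinv : (L : ℝ) * B + yW = y₀ + ∑ j ∈ Finset.Icc 1 W, xt j)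
    (hy₀ : 0 ≤ y₀ ∧ y₀ ≤ (L : ℝ)) (hyW : 0 ≤ yW ∧ yW ≤ (L : ℝ))
    (hbi : (bi = 1 ∧ (L : ℝ) ≤ y₀ + ∑ j ∈ Finset.Icc 1 L, xt j) ∨
           (bi = 0 ∧ y₀ + ∑ j ∈ Finset.Icc 1 L, xt j < (L : ℝ))) :
    |(R : ℝ) * ((L : ℝ) * B + (yW + ∑ j ∈ Finset.Icc (W + 1) (W + m), xt j)
          - (W : ℝ) / (2 * k) - (m : ℝ) * bi)
        - ∑ j ∈ Finset.Icc (m + 1) (W + m), (x j : ℝ)|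
      ≤ (R : ℝ) * ((2 : ℝ) ^ (-(1 : ℤ) - (f : ℤ)) * W + (W : ℝ) / (2 * k)) ∧
    ((2 : ℝ) ^ (-(1 : ℤ) - (f : ℤ)) + 1 / (2 * (k : ℝ)) ≤ ε →
      |(R : ℝ) * ((L : ℝ) * B + (yW + ∑ j ∈ Finset.Icc (W + 1) (W + m), xt j)
          - (W : ℝ) / (2 * k) - (m : ℝ) * bi)
        - ∑ j ∈ Finset.Icc (m + 1) (W + m), (x j : ℝ)| ≤ (R : ℝ) * W * ε) := by
  have hRpos : (0:ℝ) < R := by exact_mod_cast hR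
  have hkpos : (0:ℝ) < k := by exact_mod_cast hk
  have hWR : (W:ℝ) = (k:ℝ) * L := by exact_mod_cast hW
  have hhalf : (W:ℝ) / (2 * k) = (L:ℝ) / 2 := by
    rw [hWR]; field_simp
  set e : ℝ := (2:ℝ) ^ (-(1:ℤ) - (f:ℤ)) with he
  -- rewrite Icc to Ioc
  have i1 : Finset.Icc 1 W = Finset.Ioc 0 W := Finset.Icc_add_one_left_eq_Ioc 0 W
  have i2 : Finset.Icc (W+1) (W+m) = Finset.Ioc W (W+m) := Finset.Icc_add_one_left_eq_Ioc W (W+m)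
  have i3 : Finset.Icc (m+1) (W+m) = Finset.Ioc m (W+m) := Finset.Icc_add_one_left_eq_Ioc m (W+m)
  have i4 : Finset.Icc 1 L = Finset.Ioc 0 L := Finset.Icc_add_one_left_eq_Ioc 0 L
  have i5 : Finset.Icc 1 m = Finset.Ioc 0 m := Finset.Icc_add_one_left_eq_Ioc 0 m
  rw [i1] at hinv
  rw [i2, i3]
  rw [i4] at hbi
  have sum_nonneg' : ∀ s : Finset ℕ, 0 ≤ ∑ j ∈ s, xt j :=
    fun s => Finset.sum_nonneg (fun j _ => hxt0 j)
  have sum_le_card : ∀ a b : ℕ, ∑ j ∈ Finset.Ioc a b, xt j ≤ ((b - a : ℕ) : ℝ) := by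
    intro a b
    calc ∑ j ∈ Finset.Ioc a b, xt j ≤ ∑ _j ∈ Finset.Ioc a b, (1:ℝ) :=
          Finset.sum_le_sum (fun j _ => hxt1 j)
      _ = ((b - a : ℕ) : ℝ) := by simp [Nat.card_Ioc]
  have hmL : m ≤ L := hm.le
  have splitL : ∑ j ∈ Finset.Ioc 0 m, xt j + ∑ j ∈ Finset.Ioc m L, xt j
      = ∑ j ∈ Finset.Ioc 0 L, xt j :=
    Finset.sum_Ioc_consecutive _ (Nat.zero_le m) hmL
  have split1 : ∑ j ∈ Finset.Ioc 0 W, xt j + ∑ j ∈ Finset.Ioc W (W+m), xt j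
      = ∑ j ∈ Finset.Ioc 0 (W+m), xt j :=
    Finset.sum_Ioc_consecutive _ (Nat.zero_le W) (Nat.le_add_right W m)
  have split2 : ∑ j ∈ Finset.Ioc 0 m, xt j + ∑ j ∈ Finset.Ioc m (W+m), xt j
      = ∑ j ∈ Finset.Ioc 0 (W+m), xt j :=
    Finset.sum_Ioc_consecutive _ (Nat.zero_le m) (Nat.le_add_left m W)
  set A : ℝ := y₀ + ∑ j ∈ Finset.Ioc 0 m, xt j - (m:ℝ) * bi - (L:ℝ) / 2 with hA_def
  set T : ℝ := ∑ j ∈ Finset.Ioc m (W+m), ((x j : ℝ) / R - xt j) with hT_def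
  have hA : |A| ≤ (L:ℝ) / 2 := by
    rw [abs_le]
    have h1 : ∑ j ∈ Finset.Ioc 0 m, xt j ≤ ((m - 0 : ℕ) : ℝ) := sum_le_card 0 m
    have h1' : ((m - 0 : ℕ) : ℝ) = (m : ℝ) := by simp
    have h2 : 0 ≤ ∑ j ∈ Finset.Ioc 0 m, xt j := sum_nonneg' _
    have h3 : ∑ j ∈ Finset.Ioc m L, xt j ≤ ((L - m : ℕ) : ℝ) := sum_le_card m L
    have h3' : ((L - m : ℕ) : ℝ) = (L : ℝ) - m := by
      rw [Nat.cast_sub hmL]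
    have h4 : 0 ≤ ∑ j ∈ Finset.Ioc m L, xt j := sum_nonneg' _
    rw [hA_def]
    rcases hbi with ⟨hb, hth⟩ | ⟨hb, hth⟩ <;> rw [hb] <;> constructor <;>
      linarith [hy₀.1, hy₀.2, splitL, h1, h1', h2, h3, h3', h4]
  have hepos : 0 ≤ e := le_of_lt (zpow_pos (by norm_num) _)
  have hT : |T| ≤ e * W := by
    calc |T| ≤ ∑ j ∈ Finset.Ioc m (W+m), |(x j : ℝ) / R - xt j| :=
          Finset.abs_sum_le_sum_abs _ _
      _ ≤ ∑ _j ∈ Finset.Ioc m (W+m), e := Finset.sum_le_sum (fun j _ => hrnd j)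
      _ = e * W := by
          rw [Finset.sum_const, Nat.card_Ioc]
          simp [mul_comm]
  have hmulx : (R:ℝ) * T = ∑ j ∈ Finset.Ioc m (W+m), (x j : ℝ)
      - (R:ℝ) * ∑ j ∈ Finset.Ioc m (W+m), xt j := by
    rw [hT_def, Finset.sum_sub_distrib, mul_sub, Finset.mul_sum]
    congr 1
    apply Finset.sum_congr rfl
    intro j _
    field_simp
  have key : (R : ℝ) * ((L : ℝ) * B + (yW + ∑ j ∈ Finset.Ioc W (W + m), xt j)
          - (W : ℝ) / (2 * k) - (m : ℝ) * bi)
        - ∑ j ∈ Finset.Ioc m (W + m), (x j : ℝ)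
      = (R:ℝ) * A - (R:ℝ) * T := by
    rw [hmulx, hA_def]
    linear_combination (R:ℝ) * hinv + (R:ℝ) * split1 - (R:ℝ) * split2 - (R:ℝ) * hhalf
  have main : |(R : ℝ) * ((L : ℝ) * B + (yW + ∑ j ∈ Finset.Ioc W (W + m), xt j)
          - (W : ℝ) / (2 * k) - (m : ℝ) * bi)
        - ∑ j ∈ Finset.Ioc m (W + m), (x j : ℝ)|
      ≤ (R : ℝ) * (e * W + (W : ℝ) / (2 * k)) := by
    rw [key, ← mul_sub, abs_mul, abs_of_pos hRpos, hhalf]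
    apply mul_le_mul_of_nonneg_left _ hRpos.le
    calc |A - T| ≤ |A| + |T| := abs_sub A T
      _ ≤ e * W + (L:ℝ)/2 := by linarith
  refine ⟨main, fun hε => ?_⟩
  have heq : (R:ℝ) * (e * W + (W:ℝ)/(2*k)) = (R:ℝ) * W * (e + 1/(2*k)) := by ring
  have hle : (R:ℝ) * W * (e + 1/(2*k)) ≤ (R:ℝ) * W * ε :=
    mul_le_mul_of_nonneg_left hε (by positivity)
  calc |(R : ℝ) * ((L : ℝ) * B + (yW + ∑ j ∈ Finset.Ioc W (W + m), xt j)
          - (W : ℝ) / (2 * k) - (m : ℝ) * bi)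
        - ∑ j ∈ Finset.Ioc m (W + m), (x j : ℝ)|
      ≤ (R : ℝ) * (e * W + (W : ℝ) / (2 * k)) := main
    _ = (R:ℝ) * W * (e + 1/(2*k)) := heq
    _ ≤ (R:ℝ) * W * ε := hle
end

section
/- With f = ⌈log₂(ε⁻¹·log₂W)⌉, the number of blocks k = ⌈1/(2ε − 2^{−f})⌉ satisfies k ≤ ⌈log₂W / (2ε(log₂W − 1))⌉; moreover 2^{−f} + 1/(2k) ≤ ε, and k ≤ W provided ε⁻¹ ≤ 2W(1 − 1/log₂W). -/
/-- With `f = ⌈log₂(ε⁻¹·log₂ W)⌉`, the number of blocks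
`k = ⌈1/(2ε − 2^{−f})⌉` satisfies `k ≤ ⌈log₂ W / (2ε(log₂ W − 1))⌉`; moreover
`2^{−1−f} + 1/(2k) ≤ ε`, and `k ≤ W` provided `ε⁻¹ ≤ 2W(1 − 1/log₂ W)`. -/
theorem stmt_13 (W : ℕ) (hW : 4 ≤ W) (ε : ℝ) (hε : 0 < ε) (hε4 : ε ≤ 1 / 4) :
    let f : ℤ := ⌈Real.logb 2 (ε⁻¹ * Real.logb 2 (W : ℝ))⌉
    let k : ℕ := ⌈1 / (2 * ε - (2 : ℝ) ^ (-f))⌉₊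
    k ≤ ⌈Real.logb 2 (W : ℝ) / (2 * ε * (Real.logb 2 (W : ℝ) - 1))⌉₊ ∧
      (2 : ℝ) ^ (-1 - f) + 1 / (2 * (k : ℝ)) ≤ ε ∧
      (ε⁻¹ ≤ 2 * (W : ℝ) * (1 - 1 / Real.logb 2 (W : ℝ)) → k ≤ W) := by
  intro f k
  have hf0 : Real.logb 2 (ε⁻¹ * Real.logb 2 (W:ℝ)) ≤ (f:ℝ) := Int.le_ceil _
  have hkdef : k = ⌈1 / (2 * ε - (2 : ℝ) ^ (-f))⌉₊ := rfl
  clear_value k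
  clear_value f
  set L : ℝ := Real.logb 2 (W : ℝ) with hLdef
  have hWr : (4:ℝ) ≤ (W:ℝ) := by exact_mod_cast hW
  have h24 : (2:ℝ) ^ (2:ℝ) = 4 := by
    rw [show ((2:ℝ):ℝ) = ((2:ℕ):ℝ) by norm_num, Real.rpow_natCast]; norm_num
  have hL2 : (2:ℝ) ≤ L := by
    rw [hLdef, Real.le_logb_iff_rpow_le (by norm_num) (by linarith)]
    linarith
  have hL0 : (0:ℝ) < L := by linarith
  have hX : (0:ℝ) < ε⁻¹ * L := by positivity
  -- 2^(-f) ≤ ε/L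
  have hf : Real.logb 2 (ε⁻¹ * L) ≤ (f:ℝ) := hf0
  have hpow : ε⁻¹ * L ≤ (2:ℝ) ^ (f:ℝ) := by
    calc ε⁻¹ * L = (2:ℝ) ^ Real.logb 2 (ε⁻¹ * L) :=
          (Real.rpow_logb (by norm_num) (by norm_num) hX).symm
      _ ≤ (2:ℝ) ^ (f:ℝ) := by
          exact Real.rpow_le_rpow_left_iff (by norm_num : (1:ℝ) < 2) |>.mpr hf
  have hzp : (2:ℝ) ^ (f:ℝ) = (2:ℝ) ^ f := Real.rpow_intCast 2 f
  set p : ℝ := (2:ℝ) ^ (-f) with hpdef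
  have hp0 : (0:ℝ) < p := zpow_pos (by norm_num) _
  have hpinv : p = ((2:ℝ) ^ f)⁻¹ := by rw [hpdef, zpow_neg]
  have hpεL : p * L ≤ ε := by
    have h1 : p ≤ (ε⁻¹ * L)⁻¹ := by
      rw [hpinv]
      exact inv_anti₀ hX (hzp ▸ hpow)
    have h2 : (ε⁻¹ * L)⁻¹ = ε / L := by field_simp
    have h3 : p ≤ ε / L := h1.trans_eq h2
    calc p * L ≤ (ε / L) * L := by nlinarith
      _ = ε := by field_simp
  have hpε : p ≤ ε / 2 := by
    nlinarith
  set D : ℝ := 2 * ε - p with hDdef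
  have hD0 : 0 < D := by rw [hDdef]; nlinarith
  -- crossing inequality: 1/D ≤ L/(2ε(L-1))
  have hden : 0 < 2 * ε * (L - 1) := by nlinarith
  have hmain : 1 / D ≤ L / (2 * ε * (L - 1)) := by
    rw [div_le_div_iff₀ hD0 hden]
    nlinarith
  have hk_lb : 1 / D ≤ (k:ℝ) := by rw [hkdef]; exact Nat.le_ceil _
  have hk0 : (0:ℝ) < (k:ℝ) := lt_of_lt_of_le (by positivity) hk_lb
  have hDk : 1 ≤ (k:ℝ) * D := by
    have := (div_le_iff₀ hD0).mp hk_lb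
    linarith
  refine ⟨?_, ?_, ?_⟩
  · rw [hkdef]; exact Nat.ceil_mono hmain
  · have hsplit : (2:ℝ) ^ (-1 - f) = p / 2 := by
      rw [show (-1 - f) = (-f) + (-1) by ring, zpow_add₀ (by norm_num : (2:ℝ) ≠ 0)]
      rw [← hpdef]
      norm_num
      ring
    have hhalf : 1 / (2 * (k:ℝ)) ≤ D / 2 := by
      rw [div_le_div_iff₀ (by positivity) (by norm_num)]
      nlinarith
    rw [hsplit]
    rw [hDdef] at hhalf
    linarith
  · intro h
    have hh : L ≤ 2 * (W:ℝ) * ε * (L - 1) := by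
      have hmul := mul_le_mul_of_nonneg_right h (le_of_lt (mul_pos hε hL0))
      have e1 : ε⁻¹ * (ε * L) = L := by field_simp
      have e2 : 2 * (W:ℝ) * (1 - 1 / L) * (ε * L) = 2 * (W:ℝ) * ε * (L - 1) := by
        field_simp
      rw [e1, e2] at hmul
      exact hmul
    have hWD : 1 / D ≤ (W:ℝ) := by
      rw [div_le_iff₀ hD0]
      have hWp : (W:ℝ) * (p * L) ≤ (W:ℝ) * ε :=
        mul_le_mul_of_nonneg_left hpεL (by positivity)
      have hWε : (0:ℝ) ≤ (W:ℝ) * ε := by positivity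
      have hLe : 1 * L ≤ ((W:ℝ) * D) * L := by rw [hDdef]; linarith [hh, hWp, hWε]
      exact le_of_mul_le_mul_right hLe hL0
    rw [hkdef]
    exact Nat.ceil_le.mpr hWD
end

section
/- Algorithm 3's error bound for small ε: under the invariant (W/k)·B + y_W = y₀ + Σ_{j=1}^{W} x̃_j with 0 ≤ y₀ < W/k and total rounding error |Δ| ≤ 2^{−1−f}·R·W, the estimate Ŝ = R·((W/k)·B + y_W − W/(2k)) satisfies Δ − R·W/(2k) ≤ Ŝ − S^W < Δ + R·W/(2k); consequently |Ŝ − S^W| ≤ RWε whenever 2^{−1−f} + 1/(2k) ≤ ε. -/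
open Finset

/-- Algorithm 3's error bound for small `ε` (here the "block size"
`W/k ≤ 1` is a rational quantity, `k ≥ W`): under the invariant
`(W/k)·B + y_W = y₀ + Σ_{j=1}^{W} x̃_j` with `0 ≤ y₀ < W/k` and total rounding error
`Δ = R·Σ x̃_j − Σ x_j` (the amount added by rounding) satisfying `|Δ| ≤ 2^{−1−f}·R·W`,
the estimate `Ŝ = R·((W/k)·B + y_W − W/(2k))` satisfies
`Δ − R·W/(2k) ≤ Ŝ − S^W < Δ + R·W/(2k)`, where `S^W = Σ_{j=1}^{W} x_j`; consequently
`|Ŝ − S^W| ≤ R·W·ε` whenever `2^{−1−f} + 1/(2k) ≤ ε`. -/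
theorem stmt_15 (W k R f : ℕ) (ε : ℝ) (hW : 0 < W) (hk : W ≤ k) (hR : 0 < R)
    (x : ℕ → ℕ) (hx : ∀ j, x j ≤ R)
    (xt : ℕ → ℝ)
    (Δ y₀ yW B : ℝ)
    (hΔ : Δ = (R : ℝ) * (∑ j ∈ Finset.Icc 1 W, xt j) - ∑ j ∈ Finset.Icc 1 W, (x j : ℝ))
    (hΔbound : |Δ| ≤ (2 : ℝ) ^ (-(1 : ℤ) - (f : ℤ)) * R * W)
    (hinv : ((W : ℝ) / k) * B + yW = y₀ + ∑ j ∈ Finset.Icc 1 W, xt j)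
    (hy₀ : 0 ≤ y₀ ∧ y₀ < (W : ℝ) / k) :
    (Δ - (R : ℝ) * W / (2 * k)
        ≤ (R : ℝ) * (((W : ℝ) / k) * B + yW - (W : ℝ) / (2 * k))
          - ∑ j ∈ Finset.Icc 1 W, (x j : ℝ) ∧
      (R : ℝ) * (((W : ℝ) / k) * B + yW - (W : ℝ) / (2 * k))
          - ∑ j ∈ Finset.Icc 1 W, (x j : ℝ) < Δ + (R : ℝ) * W / (2 * k)) ∧
    ((2 : ℝ) ^ (-(1 : ℤ) - (f : ℤ)) + 1 / (2 * (k : ℝ)) ≤ ε →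
      |(R : ℝ) * (((W : ℝ) / k) * B + yW - (W : ℝ) / (2 * k))
          - ∑ j ∈ Finset.Icc 1 W, (x j : ℝ)| ≤ (R : ℝ) * W * ε) := by
  obtain ⟨hy0, hy1⟩ := hy₀
  have hRpos : (0:ℝ) < R := by exact_mod_cast hR
  have hkpos : (0:ℝ) < k := by
    have : 0 < k := lt_of_lt_of_le hW hk
    exact_mod_cast this
  have hWpos : (0:ℝ) < W := by exact_mod_cast hW
  have hkey : (R : ℝ) * (((W : ℝ) / k) * B + yW - (W : ℝ) / (2 * k))
      - ∑ j ∈ Finset.Icc 1 W, (x j : ℝ)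
      = Δ + R * (y₀ - (W : ℝ) / (2 * k)) := by
    rw [hinv, hΔ]; ring
  have hlo : Δ - (R : ℝ) * W / (2 * k)
      ≤ Δ + R * (y₀ - (W : ℝ) / (2 * k)) := by
    have : -( (W:ℝ)/(2*k)) ≤ y₀ - (W:ℝ)/(2*k) := by linarith
    have heq : (R:ℝ) * W / (2 * k) = R * ((W:ℝ)/(2*k)) := by ring
    have := mul_le_mul_of_nonneg_left this hRpos.le
    linarith
  have hhi : Δ + R * (y₀ - (W : ℝ) / (2 * k)) < Δ + (R : ℝ) * W / (2 * k) := by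
    have h2 : y₀ - (W:ℝ)/(2*k) < (W:ℝ)/(2*k) := by
      have : (W:ℝ)/k = (W:ℝ)/(2*k) + (W:ℝ)/(2*k) := by field_simp; ring
      linarith
    have heq : (R:ℝ) * W / (2 * k) = R * ((W:ℝ)/(2*k)) := by ring
    have := mul_lt_mul_of_pos_left h2 hRpos
    linarith
  refine ⟨⟨by rw [hkey]; exact hlo, by rw [hkey]; exact hhi⟩, fun hε => ?_⟩
  rw [hkey]
  have habs : |Δ + R * (y₀ - (W : ℝ) / (2 * k))| ≤ |Δ| + (R : ℝ) * W / (2 * k) := by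
    rw [abs_le]
    constructor
    · have := neg_abs_le Δ; linarith
    · have := le_abs_self Δ; linarith
  calc |Δ + R * (y₀ - (W : ℝ) / (2 * k))| ≤ |Δ| + (R : ℝ) * W / (2 * k) := habs
    _ ≤ (2 : ℝ) ^ (-(1 : ℤ) - (f : ℤ)) * R * W + (R : ℝ) * W / (2 * k) := by linarith
    _ = (R : ℝ) * W * ((2 : ℝ) ^ (-(1 : ℤ) - (f : ℤ)) + 1 / (2 * (k : ℝ))) := by
        field_simp
    _ ≤ (R : ℝ) * W * ε := by
        have : (0:ℝ) ≤ R * W := by positivity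
        exact mul_le_mul_of_nonneg_left hε this
end

section
/- Two words of L_{W,ε} that lead a correct Wε-additive Basic-Counting algorithm to the same state yield a contradiction: if s¹ = w₀¹⋯w_{z−1}¹ and s² = w₀¹⋯w_{z−1}² differ, let t be the largest index with w_t¹ ≠ w_t², and pad both with 0^{(t)ℓ} zeros (ℓ = ⌊2Wε+1⌋); then the counts of 1's in the last W bits of the two padded words differ by exactly ℓ > 2Wε, so no single query answer can be within Wε of both. -/
/-!
The window of size `W` of a padded word consists of its blocks `t, …, z - 1` followed by
zeros, so it holds `ℓ` ones per `1`-block among them. Blocks after `t` coincide in the two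
words while block `t` is `0^ℓ` in one and `1^ℓ` in the other, hence the counts differ by
exactly `ℓ`; and `ℓ = ⌊2Wε + 1⌋ > 2Wε` because `⌊x⌋₊ > x - 1`.
-/

namespace List

variable {α : Type*}

theorem count_flatMap_replicate [BEq α] [LawfulBEq α] (n : ℕ) (a : α) (l : List α) :
    (l.flatMap (replicate n ·)).count a = n * l.count a := by
  induction l with
  | nil => simp
  | cons b l ih =>
    by_cases h : b = a <;> simp [h, ih, count_replicate, Nat.mul_succ, Nat.add_comm]

theorem length_flatMap_replicate (n : ℕ) (l : List α) :
    (l.flatMap (replicate n ·)).length = l.length * n := by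
  simp [Nat.mul_comm]

theorem drop_flatMap_replicate (n t : ℕ) (l : List α) :
    (l.flatMap (replicate n ·)).drop (t * n) = (l.drop t).flatMap (replicate n ·) := by
  conv_lhs => rw [← take_append_drop t l, flatMap_append]
  rcases le_total t l.length with h | h
  · exact drop_left' (by simp [h])
  · simpa [drop_of_length_le h, take_of_length_le h] using Nat.mul_le_mul_right n h

theorem drop_ofFn_eq_cons {z t : ℕ} (ht : t < z) (c : Fin z → α) :
    (ofFn c).drop t = c ⟨t, ht⟩ :: (ofFn c).drop (t + 1) := by
  rw [drop_eq_getElem_cons (by simpa using ht), List.getElem_ofFn]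

theorem drop_ofFn_eq_drop_ofFn {z k : ℕ} {c₁ c₂ : Fin z → α}
    (h : ∀ τ : Fin z, k ≤ (τ : ℕ) → c₁ τ = c₂ τ) :
    (ofFn c₁).drop k = (ofFn c₂).drop k := by
  refine ext_getElem (by simp) fun i _ _ => ?_
  simp only [getElem_drop, List.getElem_ofFn]
  exact h _ (Nat.le_add_right k i)

theorem natAbs_count_true_cons_sub_cons {a b : Bool} (hab : a ≠ b) (r : List Bool) :
    (((a :: r).count true : ℤ) - ((b :: r).count true : ℤ)).natAbs = 1 := by
  cases a <;> cases b <;> simp_all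

theorem natAbs_count_true_drop_ofFn_sub {z t : ℕ} (ht : t < z) {c₁ c₂ : Fin z → Bool}
    (hne : c₁ ⟨t, ht⟩ ≠ c₂ ⟨t, ht⟩)
    (hagree : ∀ τ : Fin z, t < (τ : ℕ) → c₁ τ = c₂ τ) :
    ((((ofFn c₁).drop t).count true : ℤ) - (((ofFn c₂).drop t).count true : ℤ)).natAbs =
      1 := by
  rw [drop_ofFn_eq_cons ht c₁, drop_ofFn_eq_cons ht c₂, drop_ofFn_eq_drop_ofFn hagree]
  exact natAbs_count_true_cons_sub_cons hne _

end List

theorem stmt_18_general (W t : ℕ) (ε : ℝ) :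
    let ℓ : ℕ := ⌊2 * (W : ℝ) * ε + 1⌋₊
    let z : ℕ := W / ℓ
    ∀ (ht : t < z) (c₁ c₂ : Fin z → Bool),
      c₁ ⟨t, ht⟩ ≠ c₂ ⟨t, ht⟩ →
      (∀ τ : Fin z, t < (τ : ℕ) → c₁ τ = c₂ τ) →
      let u := fun c : Fin z → Bool =>
        (List.ofFn c).flatMap (fun b => List.replicate ℓ b) ++
          List.replicate (W - (z - t) * ℓ) false
      ((((u c₁).drop ((u c₁).length - W)).count true : ℤ) -
            (((u c₂).drop ((u c₂).length - W)).count true : ℤ)).natAbs = ℓ ∧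
        2 * (W : ℝ) * ε < (ℓ : ℝ) := by
  intro ℓ z ht c₁ c₂ hne hagree u
  have hwindow : ∀ c, ((u c).drop ((u c).length - W)).count true =
      ℓ * ((List.ofFn c).drop t).count true := fun c => by
    have hzℓ : z * ℓ ≤ W := Nat.div_mul_le_self W ℓ
    have htℓ : t * ℓ ≤ z * ℓ := Nat.mul_le_mul_right ℓ ht.le
    have hlen : (u c).length - W = t * ℓ := by
      simp only [u, List.length_append, List.length_flatMap_replicate, List.length_replicate,
        List.length_ofFn, Nat.sub_mul]
      omega
    rw [hlen,
      List.drop_append_of_le_length (by rwa [List.length_flatMap_replicate, List.length_ofFn]),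
      List.drop_flatMap_replicate, List.count_append, List.count_flatMap_replicate,
      List.count_replicate]
    simp
  refine ⟨?_, by simpa [ℓ] using Nat.sub_one_lt_floor (2 * (W : ℝ) * ε + 1)⟩
  rw [hwindow, hwindow, Nat.cast_mul, Nat.cast_mul, ← mul_sub, Int.natAbs_mul,
    List.natAbs_count_true_drop_ofFn_sub ht hne hagree]
  simp

/-- The combinatorial core of the lower bound: take two words of
`L_{W,ε}` (concatenations of `z = ⌊W/ℓ⌋` blocks, each `0^ℓ` or `1^ℓ`, `ℓ = ⌊2Wε + 1⌋`,
encoded by block-choice functions `c₁ c₂ : Fin z → Bool`) whose last differing block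
index is `t`. Pad both with the same suffix of zeros of the appropriate length (so that
block `t` is aligned as the oldest block fully inside the window of size `W`). Then the
counts of `1`'s in the last `W` bits of the two padded words differ by exactly `ℓ`, and
`ℓ > 2Wε` — so no single query answer can be within `Wε` of both counts. -/
theorem stmt_18 (W t : ℕ) (ε : ℝ) (hW : 0 < W) (hε : 0 ≤ ε) :
    let ℓ : ℕ := ⌊2 * (W : ℝ) * ε + 1⌋₊
    let z : ℕ := W / ℓ
    ∀ (ht : t < z) (c₁ c₂ : Fin z → Bool),
      c₁ ⟨t, ht⟩ ≠ c₂ ⟨t, ht⟩ →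
      (∀ τ : Fin z, t < (τ : ℕ) → c₁ τ = c₂ τ) →
      let u := fun c : Fin z → Bool =>
        (List.ofFn c).flatMap (fun b => List.replicate ℓ b) ++
          List.replicate (W - (z - t) * ℓ) false
      ((((u c₁).drop ((u c₁).length - W)).count true : ℤ) -
            (((u c₂).drop ((u c₂).length - W)).count true : ℤ)).natAbs = ℓ ∧
        2 * (W : ℝ) * ε < (ℓ : ℝ) :=
  stmt_18_general W t ε
end
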